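/- arXiv:1904.06593 — 6 statements merged into one kernel-verified Lean document; each statement's English description precedes it below -/
import Mathlib

section
/- If A: ℝ → ℝ is convex, then the Shakeout regularizer is nonnegative: π(w) = τ ∑_j A(θ_{j−}) + (1−τ) ∑_j A(θ_{j+}) − p·A(θ) ≥ 0. -/
open Finset

theorem ConvexOn.le_smul_sub_add_smul_add_div {𝕜 E β : Type*} [Field 𝕜] [LinearOrder 𝕜]
    [IsStrictOrderedRing 𝕜] [AddCommGroup E] [Module 𝕜 E] [AddCommMonoid β] [PartialOrder β]
    [SMul 𝕜 β] {s : Set E} {f : E → β} (hf : ConvexOn 𝕜 s f) {τ : 𝕜} (hτ : τ ∈ Set.Ioo 0 1)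
    {x q : E} (hminus : x - q ∈ s) (hplus : x + (τ / (1 - τ)) • q ∈ s) :
    f x ≤ τ • f (x - q) + (1 - τ) • f (x + (τ / (1 - τ)) • q) := by
  obtain ⟨hτ0, hτ1⟩ := hτ
  have hx : τ • (x - q) + (1 - τ) • (x + (τ / (1 - τ)) • q) = x := by
    rw [smul_add, smul_smul, mul_div_cancel₀ _ (sub_ne_zero.2 hτ1.ne'), smul_sub]
    module
  simpa only [hx] using hf.2 hminus hplus hτ0.le (sub_nonneg.2 hτ1.le) (add_sub_cancel τ 1)

theorem shakeout_regularizer_nonneg_general (p : ℕ) (τ : ℝ)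
    (hτ : τ ∈ Set.Ioo (0:ℝ) 1)
    (A : ℝ → ℝ) (hA : ConvexOn ℝ Set.univ A)
    (θ : ℝ)
    (q : Fin p → ℝ) :
    0 ≤ τ * ∑ j, A (θ - q j) + (1 - τ) * ∑ j, A (θ + τ / (1 - τ) * q j)
        - (p : ℝ) * A θ := by
  have hjensen : ∑ _j : Fin p, A θ ≤
      ∑ j, (τ * A (θ - q j) + (1 - τ) * A (θ + τ / (1 - τ) * q j)) :=
    sum_le_sum fun j _ =>
      hA.le_smul_sub_add_smul_add_div hτ (Set.mem_univ _) (Set.mem_univ _)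
  rw [sum_add_distrib, ← mul_sum, ← mul_sum, sum_const, card_univ, Fintype.card_fin,
    nsmul_eq_mul] at hjensen
  linarith

/-- Proposition 2: if `A` is convex, the Shakeout regularizer is
nonnegative:
`π(w) = τ * ∑ j, A(θ_{j-}) + (1-τ) * ∑ j, A(θ_{j+}) - p * A(θ) ≥ 0`. -/
theorem shakeout_regularizer_nonneg (p : ℕ) (w x : Fin p → ℝ) (c τ : ℝ)
    (hc : 0 < c) (hτ : τ ∈ Set.Ioo (0:ℝ) 1)
    (A : ℝ → ℝ) (hA : ConvexOn ℝ Set.univ A)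
    (θ : ℝ) (hθ : θ = ∑ j, w j * x j)
    (q : Fin p → ℝ) (hq : ∀ j, q j = x j * (w j + c * Real.sign (w j))) :
    0 ≤ τ * ∑ j, A (θ - q j) + (1 - τ) * ∑ j, A (θ + τ / (1 - τ) * q j)
        - (p : ℝ) * A θ :=
  shakeout_regularizer_nonneg_general p τ hτ A hA θ q
end

section
/- Fix θ, q ∈ ℝ with q ≠ 0 and let A: ℝ → ℝ be convex. Then the function g(τ) = τ·A(θ − q) + (1−τ)·A(θ + (τ/(1−τ))q) − A(θ) is monotonically non-decreasing on (0,1). -/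
open Set

/-- For `s₁ ≤ s₂`, `x + s₂⁻¹ • d` is the convex combination of `x` and `x + s₁⁻¹ • d` with
weight `s₁ / s₂`. -/
theorem ConvexOn.antitoneOn_mul_sub_inv_smul {𝕜 E : Type*} [Field 𝕜] [LinearOrder 𝕜]
    [IsStrictOrderedRing 𝕜] [AddCommGroup E] [Module 𝕜 E] {f : E → 𝕜}
    (hf : ConvexOn 𝕜 univ f) (x d : E) :
    AntitoneOn (fun s : 𝕜 => s * (f (x + s⁻¹ • d) - f x)) (Ioi 0) := by
  intro s₁ (h₁ : 0 < s₁) s₂ (h₂ : 0 < s₂) hle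
  have hw₀ : 0 ≤ s₁ / s₂ := by positivity
  have hw₁ : 0 ≤ 1 - s₁ / s₂ := sub_nonneg.2 ((div_le_one h₂).2 hle)
  have hcomb : (1 - s₁ / s₂) • x + (s₁ / s₂) • (x + s₁⁻¹ • d) = x + s₂⁻¹ • d := by
    rw [smul_add, smul_smul, div_mul_eq_mul_div, mul_inv_cancel₀ h₁.ne', one_div]
    module
  have hconv := hf.2 (mem_univ x) (mem_univ (x + s₁⁻¹ • d)) hw₁ hw₀ (sub_add_cancel 1 _)
  rw [hcomb, smul_eq_mul, smul_eq_mul] at hconv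
  have := mul_le_mul_of_nonneg_left hconv h₂.le
  field_simp at this ⊢
  linarith

theorem shakeout_regularizer_monotone_tau_general (A : ℝ → ℝ)
    (hA : ConvexOn ℝ Set.univ A) (θ q : ℝ) :
    MonotoneOn
      (fun τ : ℝ => τ * A (θ - q) + (1 - τ) * A (θ + τ / (1 - τ) * q) - A θ)
      (Set.Ioo (0:ℝ) 1) := by
  -- With `s = 1 - τ`, `g` is a constant plus the rescaled chord of `A` from `θ - q` to `θ - q + s⁻¹ q`.
  have hrewrite : ∀ τ ∈ Ioo (0:ℝ) 1,
      τ * A (θ - q) + (1 - τ) * A (θ + τ / (1 - τ) * q) - A θ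
        = A (θ - q) - A θ + (1 - τ) * (A (θ - q + (1 - τ)⁻¹ • q) - A (θ - q)) := by
    rintro τ ⟨-, hτ⟩
    have hpoint : θ + τ / (1 - τ) * q = θ - q + (1 - τ)⁻¹ • q := by
      have h1τ : 1 - τ ≠ 0 := (sub_pos.2 hτ).ne'
      rw [smul_eq_mul]
      field_simp
      ring
    rw [hpoint]
    ring
  intro τ₁ h₁ τ₂ h₂ hle
  have hchord := hA.antitoneOn_mul_sub_inv_smul (θ - q) q
    (show (0:ℝ) < 1 - τ₂ by linarith [h₂.2]) (show (0:ℝ) < 1 - τ₁ by linarith [h₁.2])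
    (by linarith)
  simp only at hchord ⊢
  rw [hrewrite τ₁ h₁, hrewrite τ₂ h₂]
  linarith

/-- per-coordinate version of Proposition 3: for convex `A` and
fixed `θ, q` with `q ≠ 0`, the function
`g(τ) = τ * A(θ - q) + (1-τ) * A(θ + (τ/(1-τ)) * q) - A(θ)`
is monotonically non-decreasing on `(0,1)`. -/
theorem shakeout_regularizer_monotone_tau (A : ℝ → ℝ)
    (hA : ConvexOn ℝ Set.univ A) (θ q : ℝ) (hq : q ≠ 0) :
    MonotoneOn
      (fun τ : ℝ => τ * A (θ - q) + (1 - τ) * A (θ + τ / (1 - τ) * q) - A θ)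
      (Set.Ioo (0:ℝ) 1) :=
  shakeout_regularizer_monotone_tau_general A hA θ q
end

section
/- Suppose A: ℝ → ℝ is twice differentiable with A'' > 0 everywhere, and suppose there exists j with x_j w_j ≠ 0. Then the Shakeout regularizer π(w) = τ ∑_j A(θ_{j−}) + (1−τ) ∑_j A(θ_{j+}) − p·A(θ), viewed as a function of c (through q_j = x_j(w_j + c·sgn(w_j))), is strictly increasing in c > 0. -/
open Finset

/-!
Write `q_j(c) = s_j (|w_j| + c)` with `s_j = x_j sgn(w_j)`, and let
`φ(u) = τ A(θ - u) + (1 - τ) A(θ + τ/(1-τ) u)`, so that the regularizer is `∑_j φ(q_j(c))` up to a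
constant. Since `(1 - τ) · τ/(1-τ) = τ`, we get `φ'(u) = τ (A'(θ + τ/(1-τ) u) - A'(θ - u))`, which has
the sign of `u` because `A'` is strictly increasing. Hence `c ↦ φ(s (|w_j| + c))` is strictly increasing
on `c > 0` whenever `s ≠ 0` and constant when `s = 0`, and a coordinate with `x_j w_j ≠ 0` makes the
sum strictly increasing.
-/

theorem Real.sign_mul_abs (r : ℝ) : Real.sign r * |r| = r := by
  rcases lt_trichotomy r 0 with hr | rfl | hr
  · rw [Real.sign_of_neg hr, abs_of_neg hr]; ring
  · simp
  · rw [Real.sign_of_pos hr, abs_of_pos hr]; ring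

theorem mul_add_mul_sign_eq (x w c : ℝ) :
    x * (w + c * Real.sign w) = x * Real.sign w * (|w| + c) := by
  linear_combination (-x) * Real.sign_mul_abs w

theorem StrictMono.pos_mul_sub_of_ne_zero {g : ℝ → ℝ} (hg : StrictMono g) {a b u : ℝ}
    (ha : 0 < a) (hb : 0 < b) (hu : u ≠ 0) (θ : ℝ) :
    0 < u * (g (θ + a * u) - g (θ - b * u)) := by
  rcases hu.lt_or_gt with hu | hu
  · have : g (θ + a * u) < g (θ - b * u) := hg (by nlinarith)
    exact mul_pos_of_neg_of_neg hu (by linarith)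
  · have : g (θ - b * u) < g (θ + a * u) := hg (by nlinarith)
    exact mul_pos hu (by linarith)

theorem Finset.strictMonoOn_sum {ι α M : Type*} [Preorder α] [AddCommMonoid M] [PartialOrder M]
    [IsOrderedCancelAddMonoid M] {s : Finset ι} {f : ι → α → M} {D : Set α}
    (hmono : ∀ i ∈ s, MonotoneOn (f i) D) (hstrict : ∃ i ∈ s, StrictMonoOn (f i) D) :
    StrictMonoOn (fun a => ∑ i ∈ s, f i a) D := by
  intro a ha b hb hab
  obtain ⟨i, hi, hfi⟩ := hstrict
  exact Finset.sum_lt_sum (fun j hj => hmono j hj ha hb hab.le) ⟨i, hi, hfi ha hb hab⟩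

noncomputable def shakeoutPenalty (A : ℝ → ℝ) (τ θ u : ℝ) : ℝ :=
  τ * A (θ - u) + (1 - τ) * A (θ + τ / (1 - τ) * u)

section Penalty

variable {A A' : ℝ → ℝ} {τ : ℝ}

theorem hasDerivAt_shakeoutPenalty (hA : ∀ t, HasDerivAt A (A' t) t) (hτ : τ ≠ 1) (θ u : ℝ) :
    HasDerivAt (shakeoutPenalty A τ θ)
      (τ * (A' (θ + τ / (1 - τ) * u) - A' (θ - u))) u := by
  have hminus : HasDerivAt (fun u => A (θ - u)) (A' (θ - u) * -1) u :=
    (hA _).comp u ((hasDerivAt_id u).const_sub θ)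
  have hplus : HasDerivAt (fun u => A (θ + τ / (1 - τ) * u))
      (A' (θ + τ / (1 - τ) * u) * (τ / (1 - τ) * 1)) u :=
    (hA _).comp u (((hasDerivAt_id u).const_mul _).const_add θ)
  refine ((hminus.const_mul τ).fun_add (hplus.const_mul (1 - τ))).congr_deriv ?_
  have : 1 - τ ≠ 0 := sub_ne_zero.mpr (Ne.symm hτ)
  field_simp
  ring

theorem strictMonoOn_shakeoutPenalty_mul (hA : ∀ t, HasDerivAt A (A' t) t)
    (hA' : StrictMono A') (hτ : τ ∈ Set.Ioo (0 : ℝ) 1) (θ : ℝ) {s : ℝ} (hs : s ≠ 0) :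
    StrictMonoOn (fun v => shakeoutPenalty A τ θ (s * v)) (Set.Ioi 0) := by
  obtain ⟨hτ0, hτ1⟩ := hτ
  have hderiv (v : ℝ) : HasDerivAt (fun v => shakeoutPenalty A τ θ (s * v))
      (τ * (A' (θ + τ / (1 - τ) * (s * v)) - A' (θ - s * v)) * s) v := by
    have := (hasDerivAt_shakeoutPenalty hA hτ1.ne θ (s * v)).comp v
      ((hasDerivAt_id v).const_mul s)
    rwa [mul_one] at this
  refine strictMonoOn_of_deriv_pos (convex_Ioi 0)
    (fun v _ => (hderiv v).continuousAt.continuousWithinAt) fun v hv => ?_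
  rw [interior_Ioi, Set.mem_Ioi] at hv
  have hsv := hA'.pos_mul_sub_of_ne_zero (div_pos hτ0 (sub_pos.mpr hτ1)) one_pos
    (mul_ne_zero hs hv.ne') θ
  rw [one_mul, mul_right_comm] at hsv
  rw [(hderiv v).deriv, mul_right_comm, mul_assoc]
  exact mul_pos hτ0 (pos_of_mul_pos_left hsv hv.le)

theorem strictMonoOn_shakeoutPenalty_mul_abs_add (hA : ∀ t, HasDerivAt A (A' t) t)
    (hA' : StrictMono A') (hτ : τ ∈ Set.Ioo (0 : ℝ) 1) (θ : ℝ) {s : ℝ} (hs : s ≠ 0) (w : ℝ) :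
    StrictMonoOn (fun c => shakeoutPenalty A τ θ (s * (|w| + c))) (Set.Ioi 0) :=
  (strictMonoOn_shakeoutPenalty_mul hA hA' hτ θ hs).comp
    (fun _ _ _ _ h => add_lt_add_right h _)
    (fun _ hc => add_pos_of_nonneg_of_pos (abs_nonneg w) hc)

theorem monotoneOn_shakeoutPenalty_mul_abs_add (hA : ∀ t, HasDerivAt A (A' t) t)
    (hA' : StrictMono A') (hτ : τ ∈ Set.Ioo (0 : ℝ) 1) (θ s w : ℝ) :
    MonotoneOn (fun c => shakeoutPenalty A τ θ (s * (|w| + c))) (Set.Ioi 0) := by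
  rcases eq_or_ne s 0 with rfl | hs
  · simpa using monotoneOn_const
  · exact (strictMonoOn_shakeoutPenalty_mul_abs_add hA hA' hτ θ hs w).monotoneOn

end Penalty

theorem shakeout_regularizer_strictMono_c_general (p : ℕ) (w x : Fin p → ℝ) (τ : ℝ)
    (hτ : τ ∈ Set.Ioo (0:ℝ) 1)
    (A A' A'' : ℝ → ℝ)
    (hA : ∀ t, HasDerivAt A (A' t) t)
    (hA' : ∀ t, HasDerivAt A' (A'' t) t)
    (hA'' : ∀ t, 0 < A'' t)
    (hx : ∃ j, x j * w j ≠ 0)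
    (θ : ℝ) :
    StrictMonoOn
      (fun c : ℝ =>
        τ * ∑ j, A (θ - x j * (w j + c * Real.sign (w j)))
          + (1 - τ) * ∑ j, A (θ + τ / (1 - τ) * (x j * (w j + c * Real.sign (w j))))
          - (p : ℝ) * A θ)
      (Set.Ioi (0:ℝ)) := by
  have hA'mono : StrictMono A' :=
    strictMono_of_deriv_pos fun t => (hA' t).deriv ▸ hA'' t
  have hsum : StrictMonoOn
      (fun c => ∑ j, shakeoutPenalty A τ θ (x j * Real.sign (w j) * (|w j| + c)))
      (Set.Ioi 0) := by
    obtain ⟨j, hj⟩ := hx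
    have hsj : x j * Real.sign (w j) ≠ 0 :=
      mul_ne_zero (left_ne_zero_of_mul hj)
        (Real.sign_eq_zero_iff.not.mpr (right_ne_zero_of_mul hj))
    exact Finset.strictMonoOn_sum
      (fun i _ => monotoneOn_shakeoutPenalty_mul_abs_add hA hA'mono hτ θ _ _)
      ⟨j, mem_univ j, strictMonoOn_shakeoutPenalty_mul_abs_add hA hA'mono hτ θ hsj _⟩
  intro a ha b hb hab
  simp only [mul_sum, ← sum_add_distrib, mul_add_mul_sign_eq]
  exact sub_lt_sub_right (hsum ha hb hab) _

/-- part of Proposition 3: if `A` is twice differentiable with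
`A'' > 0` everywhere and some `x j * w j ≠ 0`, then the Shakeout regularizer
`π(w) = τ * ∑ j, A(θ - q_c j) + (1-τ) * ∑ j, A(θ + (τ/(1-τ)) * q_c j) - p * A(θ)`
(with `q_c j = x j * (w j + c * sgn (w j))`), viewed as a function of `c`,
is strictly increasing on `c > 0`. -/
theorem shakeout_regularizer_strictMono_c (p : ℕ) (w x : Fin p → ℝ) (τ : ℝ)
    (hτ : τ ∈ Set.Ioo (0:ℝ) 1)
    (A A' A'' : ℝ → ℝ)
    (hA : ∀ t, HasDerivAt A (A' t) t)
    (hA' : ∀ t, HasDerivAt A' (A'' t) t)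
    (hA'' : ∀ t, 0 < A'' t)
    (hx : ∃ j, x j * w j ≠ 0)
    (θ : ℝ) (hθ : θ = ∑ j, w j * x j) :
    StrictMonoOn
      (fun c : ℝ =>
        τ * ∑ j, A (θ - x j * (w j + c * Real.sign (w j)))
          + (1 - τ) * ∑ j, A (θ + τ / (1 - τ) * (x j * (w j + c * Real.sign (w j))))
          - (p : ℝ) * A θ)
      (Set.Ioi (0:ℝ)) :=
  shakeout_regularizer_strictMono_c_general p w x τ hτ A A' A'' hA hA' hA'' hx θ
end

section
/- For linear regression, A(θ) = θ²/2, the Shakeout regularizer equals π(w) = (τ/(2(1−τ))) · ∑_{j=1}^p x_j² (w_j + c·sgn(w_j))², i.e., (τ/(2(1−τ))) ‖x ∘ (w + c·s)‖₂² where s_j = sgn(w_j). -/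
open Finset

/-- The perturbation moving `θ` to `θ - q` with probability `τ` and to `θ + τ / (1 - τ) * q`
with probability `1 - τ` has mean zero, so its second moment about `θ` is its variance. -/
theorem two_point_second_moment_sub_sq {K : Type*} [Field K] {τ : K} (hτ : τ ≠ 1) (θ q : K) :
    τ * (θ - q) ^ 2 + (1 - τ) * (θ + τ / (1 - τ) * q) ^ 2 - θ ^ 2 = τ / (1 - τ) * q ^ 2 := by
  have h : (1 : K) - τ ≠ 0 := sub_ne_zero.mpr hτ.symm
  field_simp
  ring

theorem shakeout_regularizer_linear_regression_general (p : ℕ) (w x : Fin p → ℝ)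
    (c τ : ℝ) (hτ : τ ∈ Set.Ioo (0:ℝ) 1)
    (A : ℝ → ℝ) (hA : ∀ t, A t = t ^ 2 / 2)
    (θ : ℝ)
    (q : Fin p → ℝ) (hq : ∀ j, q j = x j * (w j + c * Real.sign (w j))) :
    τ * ∑ j, A (θ - q j) + (1 - τ) * ∑ j, A (θ + τ / (1 - τ) * q j)
        - (p : ℝ) * A θ
      = τ / (2 * (1 - τ)) * ∑ j, x j ^ 2 * (w j + c * Real.sign (w j)) ^ 2 := by
  have hp : (p : ℝ) * A θ = ∑ _j : Fin p, A θ := by simp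
  rw [hp, mul_sum, mul_sum, mul_sum, ← sum_add_distrib, ← sum_sub_distrib]
  refine sum_congr rfl fun j _ => ?_
  have hj := two_point_second_moment_sub_sq hτ.2.ne θ (q j)
  rw [hA, hA, hA, ← mul_pow, ← hq, mul_comm (2 : ℝ), ← div_div]
  linear_combination hj / 2

/-- for linear regression, `A θ = θ²/2`, the Shakeout regularizer
equals `(τ/(2(1-τ))) * ∑ j, x j ^ 2 * (w j + c * sgn (w j)) ^ 2`, i.e.,
`(τ/(2(1-τ))) * ‖x ∘ (w + c·s)‖₂²`. -/
theorem shakeout_regularizer_linear_regression (p : ℕ) (w x : Fin p → ℝ)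
    (c τ : ℝ) (hc : 0 < c) (hτ : τ ∈ Set.Ioo (0:ℝ) 1)
    (A : ℝ → ℝ) (hA : ∀ t, A t = t ^ 2 / 2)
    (θ : ℝ) (hθ : θ = ∑ j, w j * x j)
    (q : Fin p → ℝ) (hq : ∀ j, q j = x j * (w j + c * Real.sign (w j))) :
    τ * ∑ j, A (θ - q j) + (1 - τ) * ∑ j, A (θ + τ / (1 - τ) * q j)
        - (p : ℝ) * A θ
      = τ / (2 * (1 - τ)) * ∑ j, x j ^ 2 * (w j + c * Real.sign (w j)) ^ 2 :=
  shakeout_regularizer_linear_regression_general p w x c τ hτ A hA θ q hq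
end

section
/- Suppose x_j w_j = 0 for all j ≠ j′ and x_{j′} ≠ 0, and A is twice differentiable with A'' > 0 everywhere. Then the Shakeout regularizer π(w), viewed as a function of w_{j′} on (0,∞) or (−∞,0), satisfies ∂π/∂w_{j′} > 0 for w_{j′} > 0 and ∂π/∂w_{j′} < 0 for w_{j′} < 0; i.e., π penalizes the magnitude of w_{j′}. -/
/-!
With all other features switched off, `θ = t x_{j'}` and only the `j'`-th noise term survives, so
`π(t) = τ A(-c x_{j'} sgn t) + (1-τ) A(θ + (τ/(1-τ)) q) - A(θ)` with `q = x_{j'} (t + c sgn t)`.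
Away from `t = 0` the first summand is locally constant, and since `(1-τ)(1 + τ/(1-τ)) = 1` the
derivative collapses to `x_{j'} (A'(θ + (τ/(1-τ)) q) - A'(θ))`. As `A'` is strictly increasing,
this has the sign of `q / x_{j'} = t + c sgn t`, which is the sign of `t`.
-/

open Finset

noncomputable section

variable {ι : Type*} [Fintype ι]

def shakeoutRegularizer (A : ℝ → ℝ) (c τ : ℝ) (x v : ι → ℝ) : ℝ :=
  τ * ∑ j, A ((∑ i, v i * x i) - x j * (v j + c * Real.sign (v j)))
    + (1 - τ) * ∑ j, A ((∑ i, v i * x i) + τ / (1 - τ) * (x j * (v j + c * Real.sign (v j))))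
    - (Fintype.card ι : ℝ) * A (∑ i, v i * x i)

/-- The contribution of one feature with noise perturbation `q` at linear predictor `θ`. -/
def shakeoutTerm (A : ℝ → ℝ) (τ θ q : ℝ) : ℝ :=
  τ * A (θ - q) + (1 - τ) * A (θ + τ / (1 - τ) * q) - A θ

@[simp]
theorem shakeoutTerm_zero_right (A : ℝ → ℝ) (τ θ : ℝ) : shakeoutTerm A τ θ 0 = 0 := by
  simp only [shakeoutTerm, sub_zero, mul_zero, add_zero]
  ring

theorem shakeoutRegularizer_eq_sum (A : ℝ → ℝ) (c τ : ℝ) (x v : ι → ℝ) :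
    shakeoutRegularizer A c τ x v =
      ∑ j, shakeoutTerm A τ (∑ i, v i * x i) (x j * (v j + c * Real.sign (v j))) := by
  simp only [shakeoutRegularizer, shakeoutTerm, sum_sub_distrib, sum_add_distrib, ← mul_sum,
    sum_const, card_univ, nsmul_eq_mul]

theorem shakeoutRegularizer_eq_shakeoutTerm_of_mul_eq_zero (A : ℝ → ℝ) (c τ : ℝ) {x v : ι → ℝ}
    {j' : ι} (hzero : ∀ j, j ≠ j' → x j * v j = 0) :
    shakeoutRegularizer A c τ x v =
      shakeoutTerm A τ (v j' * x j') (x j' * (v j' + c * Real.sign (v j'))) := by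
  have hθ : ∑ i, v i * x i = v j' * x j' :=
    sum_eq_single j' (fun j _ hj => by rw [mul_comm, hzero j hj]) (by simp)
  rw [shakeoutRegularizer_eq_sum, hθ]
  refine sum_eq_single j' (fun j _ hj => ?_) (by simp)
  -- `x j * v j = 0` also kills `x j * sign (v j)`, since `sign 0 = 0`.
  rcases mul_eq_zero.1 (hzero j hj) with hx | hv
  · simp [hx]
  · simp [hv]

theorem shakeoutRegularizer_update_of_mul_eq_zero [DecidableEq ι] (A : ℝ → ℝ) (c τ : ℝ)
    {x w : ι → ℝ} {j' : ι} (hzero : ∀ j, j ≠ j' → x j * w j = 0) (t : ℝ) :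
    shakeoutRegularizer A c τ x (Function.update w j' t) =
      shakeoutTerm A τ (t * x j') (x j' * (t + c * Real.sign t)) := by
  rw [shakeoutRegularizer_eq_shakeoutTerm_of_mul_eq_zero A c τ (j' := j') fun j hj => ?_,
    Function.update_self]
  rw [Function.update_of_ne hj, hzero j hj]

end

theorem StrictMono.mul_sub_pos {f : ℝ → ℝ} (hf : StrictMono f) (a : ℝ) {y : ℝ} (hy : y ≠ 0) :
    0 < y * (f (a + y) - f a) := by
  rcases hy.lt_or_gt with hy | hy
  · exact mul_pos_of_neg_of_neg hy (sub_neg.2 (hf (by linarith)))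
  · exact mul_pos hy (sub_pos.2 (hf (by linarith)))

theorem Real.eventually_sign_eq {t : ℝ} (ht : t ≠ 0) :
    ∀ᶠ u in nhds t, Real.sign u = Real.sign t := by
  rcases ht.lt_or_gt with ht | ht
  · filter_upwards [Iio_mem_nhds ht] with u hu
    rw [Real.sign_of_neg hu, Real.sign_of_neg ht]
  · filter_upwards [Ioi_mem_nhds ht] with u hu
    rw [Real.sign_of_pos hu, Real.sign_of_pos ht]

section Profile

variable {A A' : ℝ → ℝ} {τ : ℝ}

theorem hasDerivAt_shakeoutTerm_mul_add (hA : ∀ t, HasDerivAt A (A' t) t) (hτ : τ ≠ 1)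
    (s b t : ℝ) :
    HasDerivAt (fun u => shakeoutTerm A τ (u * s) (s * (u + b)))
      (s * (A' (t * s + τ / (1 - τ) * (s * (t + b))) - A' (t * s))) t := by
  have hθ : HasDerivAt (fun u : ℝ => u * s) s t := by simpa using (hasDerivAt_id t).mul_const s
  have hq : HasDerivAt (fun u : ℝ => s * (u + b)) s t := by
    simpa using ((hasDerivAt_id t).add_const b).const_mul s
  have h := (((hA _).comp t (hθ.sub hq)).const_mul τ).add
    (((hA _).comp t (hθ.add (hq.const_mul (τ / (1 - τ))))).const_mul (1 - τ)) |>.sub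
    ((hA _).comp t hθ)
  have h1τ : 1 - τ ≠ 0 := sub_ne_zero.2 hτ.symm
  refine h.congr_deriv ?_
  simp only [Pi.add_apply, Pi.sub_apply, sub_self, mul_zero, zero_add]
  field_simp
  ring

theorem hasDerivAt_shakeoutTerm_sign (hA : ∀ t, HasDerivAt A (A' t) t) (hτ : τ ≠ 1)
    (s c : ℝ) {t : ℝ} (ht : t ≠ 0) :
    HasDerivAt (fun u => shakeoutTerm A τ (u * s) (s * (u + c * Real.sign u)))
      (s * (A' (t * s + τ / (1 - τ) * (s * (t + c * Real.sign t))) - A' (t * s))) t :=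
  (hasDerivAt_shakeoutTerm_mul_add hA hτ s _ t).congr_of_eventuallyEq <| by
    filter_upwards [Real.eventually_sign_eq ht] with u hu
    rw [hu]

theorem mul_shakeoutTerm_deriv_pos (hA' : StrictMono A') (hτ : τ ∈ Set.Ioo (0 : ℝ) 1)
    {s u : ℝ} (hs : s ≠ 0) (hu : u ≠ 0) (a : ℝ) :
    0 < u * (s * (A' (a + τ / (1 - τ) * (s * u)) - A' a)) := by
  have hr : 0 < τ / (1 - τ) := div_pos hτ.1 (sub_pos.2 hτ.2)
  have h := hA'.mul_sub_pos a (mul_ne_zero hr.ne' (mul_ne_zero hs hu))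
  rw [show τ / (1 - τ) * (s * u) * (A' (a + τ / (1 - τ) * (s * u)) - A' a)
    = τ / (1 - τ) * (u * (s * (A' (a + τ / (1 - τ) * (s * u)) - A' a))) by ring] at h
  exact pos_of_mul_pos_right h hr.le

end Profile

/-- Proposition 4(i): suppose `x j * w j = 0` for all `j ≠ j'`,
`x j' ≠ 0`, and `A` is twice differentiable with `A'' > 0` everywhere. Then the
Shakeout regularizer `π`, viewed as a function of the value `t` of `w j'`,
has positive derivative for `t > 0` and negative derivative for `t < 0`. -/
theorem shakeout_regularizer_penalizes_magnitude (p : ℕ) (w x : Fin p → ℝ)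
    (c τ : ℝ) (hc : 0 < c) (hτ : τ ∈ Set.Ioo (0:ℝ) 1)
    (j' : Fin p) (hzero : ∀ j, j ≠ j' → x j * w j = 0) (hx : x j' ≠ 0)
    (A A' A'' : ℝ → ℝ)
    (hA : ∀ t, HasDerivAt A (A' t) t)
    (hA' : ∀ t, HasDerivAt A' (A'' t) t)
    (hA'' : ∀ t, 0 < A'' t)
    (π : ℝ → ℝ)
    (hπ : ∀ t : ℝ, π t =
      (fun (v : Fin p → ℝ) =>
        τ * ∑ j, A ((∑ i, v i * x i) - x j * (v j + c * Real.sign (v j)))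
          + (1 - τ) * ∑ j, A ((∑ i, v i * x i)
              + τ / (1 - τ) * (x j * (v j + c * Real.sign (v j))))
          - (p : ℝ) * A (∑ i, v i * x i)) (Function.update w j' t)) :
    (∀ t : ℝ, 0 < t → ∃ d : ℝ, 0 < d ∧ HasDerivAt π d t) ∧
    (∀ t : ℝ, t < 0 → ∃ d : ℝ, d < 0 ∧ HasDerivAt π d t) := by
  have hπ_eq : π = fun u => shakeoutTerm A τ (u * x j') (x j' * (u + c * Real.sign u)) := by
    ext t
    rw [hπ, ← shakeoutRegularizer_update_of_mul_eq_zero A c τ hzero, shakeoutRegularizer,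
      Fintype.card_fin]
  subst hπ_eq
  have hderiv t (ht : t ≠ 0) := hasDerivAt_shakeoutTerm_sign hA hτ.2.ne (x j') c ht
  have hsign u (hu : u ≠ 0) := mul_shakeoutTerm_deriv_pos
    (strictMono_of_hasDerivAt_pos hA' hA'') hτ hx hu
  refine ⟨fun t ht => ⟨_, ?_, hderiv t ht.ne'⟩, fun t ht => ⟨_, ?_, hderiv t ht.ne⟩⟩
  · rw [Real.sign_of_pos ht]
    exact pos_of_mul_pos_right (hsign (t + c * 1) (by linarith) _) (by linarith)
  · rw [Real.sign_of_neg ht]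
    exact neg_of_mul_pos_right (hsign (t + c * -1) (by linarith) _) (by linarith)
end

section
/- For logistic regression with a single active coordinate (x_j w_j = 0 for j ≠ j′, x_{j′} ≠ 0, all other weights zero), the Shakeout regularizer is bounded: π(w) ≤ τ · ln(1 + exp(c |x_{j′}|)). -/
open Finset

private noncomputable def shkL (t : ℝ) : ℝ := Real.log (1 + Real.exp t)

private lemma shkL_nonneg (t : ℝ) : 0 ≤ shkL t :=
  Real.log_nonneg (by nlinarith [Real.exp_pos t])

private lemma shkL_ge (t : ℝ) : t ≤ shkL t := by
  have := Real.log_le_log (Real.exp_pos t) (by nlinarith [Real.exp_pos t] : Real.exp t ≤ 1 + Real.exp t)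
  simpa [Real.log_exp, shkL] using this

private lemma shkL_mono {a b : ℝ} (h : a ≤ b) : shkL a ≤ shkL b :=
  Real.log_le_log (by positivity) (by have := Real.exp_le_exp.2 h; linarith)

private lemma shkL_lip {a u : ℝ} (hu : 0 ≤ u) : shkL (a + u) ≤ shkL a + u := by
  have h1 : (1:ℝ) ≤ Real.exp u := Real.one_le_exp hu
  have h2 : 1 + Real.exp (a + u) ≤ Real.exp u * (1 + Real.exp a) := by
    rw [Real.exp_add]; nlinarith [Real.exp_pos a, Real.exp_pos u]
  calc shkL (a + u) ≤ Real.log (Real.exp u * (1 + Real.exp a)) :=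
        Real.log_le_log (by positivity) h2
    _ = shkL a + u := by
        rw [Real.log_mul (by positivity) (by positivity), Real.log_exp, shkL]; ring

private lemma shkL_neg (t : ℝ) : shkL (-t) = shkL t - t := by
  have : (1 : ℝ) + Real.exp (-t) = (1 + Real.exp t) * Real.exp (-t) := by
    rw [add_mul, one_mul, ← Real.exp_add]
    simp [add_comm]
  rw [shkL, this, Real.log_mul (by positivity) (by positivity), Real.log_exp, shkL]
  ring

/-- scalar core inequality -/
private lemma shk_core {τ θ D : ℝ} (hτ0 : 0 < τ) (hτ1 : τ < 1) :
    τ * shkL D + (1 - τ) * shkL (θ + τ / (1 - τ) * (θ - D)) - shkL θ ≤ τ * shkL |D| := by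
  have h1τ : (0:ℝ) < 1 - τ := by linarith
  set Q := θ - D with hQ
  rcases le_or_gt Q 0 with hq | hq
  · have hk : τ / (1 - τ) * Q ≤ 0 :=
      mul_nonpos_of_nonneg_of_nonpos (le_of_lt (div_pos hτ0 h1τ)) hq
    have h2 : shkL (θ + τ / (1 - τ) * Q) ≤ shkL θ := shkL_mono (by linarith)
    have h3 : shkL D ≤ shkL |D| := shkL_mono (le_abs_self D)
    nlinarith [shkL_nonneg θ]
  · have hk : 0 ≤ τ / (1 - τ) * Q :=
      mul_nonneg (le_of_lt (div_pos hτ0 h1τ)) hq.le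
    have h2 : shkL (θ + τ / (1 - τ) * Q) ≤ shkL θ + τ / (1 - τ) * Q := shkL_lip hk
    have h4 : (1 - τ) * (τ / (1 - τ) * Q) = τ * Q := by field_simp
    have h5 : shkL (-D) ≤ shkL |D| := shkL_mono (neg_le_abs D)
    have h6 : shkL (-D) = shkL D - D := shkL_neg D
    have h7 : θ ≤ shkL θ := shkL_ge θ
    nlinarith

/-- for logistic regression (`A θ = ln(1+exp θ)`) with a single
active coordinate (`w j = 0` and `x j * w j = 0` for `j ≠ j'`, `x j' ≠ 0`),
the Shakeout regularizer is bounded: `π(w) ≤ τ * ln(1 + exp (c * |x j'|))`. -/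
theorem shakeout_regularizer_logistic_bound (p : ℕ) (w x : Fin p → ℝ)
    (c τ : ℝ) (hc : 0 < c) (hτ : τ ∈ Set.Ioo (0:ℝ) 1)
    (j' : Fin p) (hw : ∀ j, j ≠ j' → w j = 0)
    (hzero : ∀ j, j ≠ j' → x j * w j = 0) (hx : x j' ≠ 0)
    (A : ℝ → ℝ) (hA : ∀ t, A t = Real.log (1 + Real.exp t))
    (θ : ℝ) (hθ : θ = ∑ j, w j * x j)
    (q : Fin p → ℝ) (hq : ∀ j, q j = x j * (w j + c * Real.sign (w j))) :
    τ * ∑ j, A (θ - q j) + (1 - τ) * ∑ j, A (θ + τ / (1 - τ) * q j)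
        - (p : ℝ) * A θ
      ≤ τ * Real.log (1 + Real.exp (c * |x j'|)) := by
  obtain ⟨hτ0, hτ1⟩ := hτ
  have hAL : A = shkL := by funext t; rw [hA t, shkL]
  have hp : 1 ≤ p := Nat.one_le_iff_ne_zero.2 (by rintro rfl; exact j'.elim0)
  -- q j = 0 for j ≠ j'
  have hq0 : ∀ j, j ≠ j' → q j = 0 := by
    intro j hj
    rw [hq j, hw j hj, Real.sign_zero]
    ring
  -- θ = w j' * x j'
  have hθ' : θ = w j' * x j' := by
    rw [hθ, Finset.sum_eq_single j']
    · intro b _ hb; rw [hw b hb]; ring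
    · intro h; exact absurd (mem_univ j') h
  -- sum reductions
  have hsum : ∀ f : ℝ → ℝ, ∑ j, f (q j) = f (q j') + ((p : ℝ) - 1) * f 0 := by
    intro f
    rw [← Finset.add_sum_erase _ _ (mem_univ j')]
    congr 1
    rw [Finset.sum_congr rfl (fun j hj => by rw [hq0 j (Finset.ne_of_mem_erase hj)]),
      Finset.sum_const, Finset.card_erase_of_mem (mem_univ j'), Finset.card_univ,
      Fintype.card_fin, nsmul_eq_mul, Nat.cast_sub hp, Nat.cast_one]
  have hs1 : ∑ j, A (θ - q j) = A (θ - q j') + ((p:ℝ) - 1) * A θ := by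
    simpa using hsum (fun t => A (θ - t))
  have hs2 : ∑ j, A (θ + τ / (1 - τ) * q j)
      = A (θ + τ / (1 - τ) * q j') + ((p:ℝ) - 1) * A θ := by
    simpa using hsum (fun t => A (θ + τ / (1 - τ) * t))
  rw [hs1, hs2, hAL]
  -- identify θ - q j' = - c * x j' * sign (w j')
  have hD : θ - q j' = -(c * x j' * Real.sign (w j')) := by
    rw [hq j', hθ']; ring
  have habs : |θ - q j'| ≤ c * |x j'| := by
    rw [hD, abs_neg, abs_mul, abs_mul, abs_of_pos hc]
    rcases lt_trichotomy (w j') 0 with h | h | h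
    · rw [Real.sign_of_neg h]; simp
    · rw [h, Real.sign_zero]; simp; positivity
    · rw [Real.sign_of_pos h]; simp
  have hQ : q j' = θ - (θ - q j') := by ring
  have core := shk_core (θ := θ) (D := θ - q j') hτ0 hτ1
  rw [← hQ] at core
  have hmono : shkL |θ - q j'| ≤ shkL (c * |x j'|) := shkL_mono habs
  have hfin : τ * shkL |θ - q j'| ≤ τ * Real.log (1 + Real.exp (c * |x j'|)) := by
    have : shkL (c * |x j'|) = Real.log (1 + Real.exp (c * |x j'|)) := rfl
    nlinarith
  nlinarith [core]
end
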